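/- Let m > 0, k, M, θ̇₀ be real constants. On the open set of points (r, ϑ, φ, p_r, p_ϑ, p_φ) with r > 0, sin ϑ ≠ 0, and 1 + (θ̇₀/m)sin(2φ) > 0, consider the Hamiltonian H' = (1/(2m))[p_r² + M² p_ϑ²/r² + (1 + (θ̇₀/m)sin(2φ)) p_φ²/(r² sin²ϑ)] − k/r and the function L̃² = M² p_ϑ² + (1 + (θ̇₀/m)sin(2φ)) p_φ²/sin²ϑ (the squared modified angular momentum). Then L̃² is an integral of motion: the canonical Poisson bracket {H', L̃²}, summed over the three conjugate pairs (r,p_r), (ϑ,p_ϑ), (φ,p_φ), vanishes identically on this set. -/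

import Mathlib

open scoped BigOperators

/-- Phase space: an open subset of ℝ⁶ with spherical-polar coordinates
`z.1 = (r, ϑ, φ)` and conjugate momenta `z.2 = (p_r, p_ϑ, p_φ)`. -/
abbrev PhaseSpace := (Fin 3 → ℝ) × (Fin 3 → ℝ)

/-- Partial derivative of `f` with respect to the position coordinate indexed by `ν`. -/
noncomputable def pdQ (f : PhaseSpace → ℝ) (ν : Fin 3) (z : PhaseSpace) : ℝ :=
  fderiv ℝ f z (Pi.single ν 1, 0)

/-- Partial derivative of `f` with respect to the momentum coordinate indexed by `ν`. -/
noncomputable def pdP (f : PhaseSpace → ℝ) (ν : Fin 3) (z : PhaseSpace) : ℝ :=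
  fderiv ℝ f z (0, Pi.single ν 1)

/-- Canonical Poisson bracket, summed over the three conjugate pairs. -/
noncomputable def canBracket (f g : PhaseSpace → ℝ) (z : PhaseSpace) : ℝ :=
  ∑ ν : Fin 3, (pdP f ν z * pdQ g ν z - pdQ f ν z * pdP g ν z)

/-- The Kepler Hamiltonian in spherical-polar coordinates:
`H' = (1/(2m))[p_r² + M² p_ϑ²/r² + (1 + (θ̇₀/m) sin 2φ) p_φ²/(r² sin²ϑ)] − k/r`. -/
noncomputable def Hsph (m k M θ0 : ℝ) (z : PhaseSpace) : ℝ :=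
  (1 / (2 * m)) * ((z.2 0) ^ 2 + M ^ 2 * (z.2 1) ^ 2 / (z.1 0) ^ 2
      + (1 + (θ0 / m) * Real.sin (2 * z.1 2)) * (z.2 2) ^ 2
        / ((z.1 0) ^ 2 * (Real.sin (z.1 1)) ^ 2))
    - k / z.1 0

/-- The squared modified angular momentum
`L̃² = M² p_ϑ² + (1 + (θ̇₀/m) sin 2φ) p_φ²/sin²ϑ`. -/
noncomputable def Lsq (m M θ0 : ℝ) (z : PhaseSpace) : ℝ :=
  M ^ 2 * (z.2 1) ^ 2
    + (1 + (θ0 / m) * Real.sin (2 * z.1 2)) * (z.2 2) ^ 2 / (Real.sin (z.1 1)) ^ 2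

/-!
`H'` depends on the phase point only through `r`, `p_r` and `L̃²`:
`H' = Φ(r, p_r, L̃²)` with `Φ(r, p, L) = (p² + L/r²)/(2m) − k/r`. The bracket is a derivation in
its first slot, so `{H', L̃²} = ∂_rΦ {r, L̃²} + ∂_pΦ {p_r, L̃²} + ∂_LΦ {L̃², L̃²}`. The last bracket
vanishes by antisymmetry and the first two because `L̃²` involves neither `p_r` nor `r`.
-/

theorem fderiv_apply_eq_zero_of_forall_add_smul_eq {E F : Type*} [NormedAddCommGroup E]
    [NormedSpace ℝ E] [NormedAddCommGroup F] [NormedSpace ℝ F] {f : E → F} {z v : E}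
    (hf : ∀ t : ℝ, f (z + t • v) = f z) : fderiv ℝ f z v = 0 := by
  by_cases hd : DifferentiableAt ℝ f z
  · rw [← hd.lineDeriv_eq_fderiv, lineDeriv, funext hf, deriv_const]
  · simp [fderiv_zero_of_not_differentiableAt hd]

theorem canBracket_comp {ι : Type*} [Fintype ι] {Φ : (ι → ℝ) → ℝ} {u : PhaseSpace → ι → ℝ}
    {z : PhaseSpace} (hΦ : DifferentiableAt ℝ Φ (u z)) (hu : DifferentiableAt ℝ u z)
    (g : PhaseSpace → ℝ) :
    canBracket (Φ ∘ u) g z = fderiv ℝ Φ (u z) (fun i => canBracket (fun y => u y i) g z) := by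
  have hcomp : ∀ v, fderiv ℝ (Φ ∘ u) z v = fderiv ℝ Φ (u z) (fderiv ℝ u z v) := fun v => by
    rw [fderiv_comp z hΦ hu]; rfl
  have hcoord : ∀ i v, fderiv ℝ (fun y => u y i) z v = fderiv ℝ u z v i := fun i v => by
    rw [fderiv_apply hu i]; rfl
  simp only [canBracket, pdP, pdQ, hcoord, hcomp]
  set L := fderiv ℝ u z
  set e : Fin 3 → PhaseSpace := fun ν => (Pi.single ν 1, 0)
  set f : Fin 3 → PhaseSpace := fun ν => (0, Pi.single ν 1)
  have hvec : (fun i => ∑ ν, (L (f ν) i * fderiv ℝ g z (e ν) - L (e ν) i * fderiv ℝ g z (f ν))) =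
      ∑ ν, (fderiv ℝ g z (e ν) • L (f ν) - fderiv ℝ g z (f ν) • L (e ν)) := by
    ext i; simp [Finset.sum_apply, mul_comm]
  rw [hvec]
  simp [map_sum, mul_comm, e, f]

theorem canBracket_fst_apply_left (ν : Fin 3) (g : PhaseSpace → ℝ) (z : PhaseSpace) :
    canBracket (fun y => y.1 ν) g z = -pdP g ν z := by
  have hlin : (fun y : PhaseSpace => y.1 ν) =
      (ContinuousLinearMap.proj ν).comp (ContinuousLinearMap.fst ℝ _ _) := rfl
  simp [canBracket, pdP, pdQ, hlin, Pi.single_apply]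

theorem canBracket_snd_apply_left (ν : Fin 3) (g : PhaseSpace → ℝ) (z : PhaseSpace) :
    canBracket (fun y => y.2 ν) g z = pdQ g ν z := by
  have hlin : (fun y : PhaseSpace => y.2 ν) =
      (ContinuousLinearMap.proj ν).comp (ContinuousLinearMap.snd ℝ _ _) := rfl
  simp [canBracket, pdP, pdQ, hlin, Pi.single_apply]

theorem canBracket_self (f : PhaseSpace → ℝ) (z : PhaseSpace) : canBracket f f z = 0 := by
  simp [canBracket, mul_comm]

theorem pdQ_Lsq_zero (m M θ0 : ℝ) (z : PhaseSpace) : pdQ (Lsq m M θ0) 0 z = 0 :=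
  fderiv_apply_eq_zero_of_forall_add_smul_eq fun t => by simp [Lsq]

theorem pdP_Lsq_zero (m M θ0 : ℝ) (z : PhaseSpace) : pdP (Lsq m M θ0) 0 z = 0 :=
  fderiv_apply_eq_zero_of_forall_add_smul_eq fun t => by simp [Lsq]

theorem differentiableAt_Lsq (m M θ0 : ℝ) {z : PhaseSpace} (hz : Real.sin (z.1 1) ≠ 0) :
    DifferentiableAt ℝ (Lsq m M θ0) z := by
  unfold Lsq
  fun_prop (disch := exact pow_ne_zero 2 hz)

noncomputable def reducedHamiltonian (m k : ℝ) (w : Fin 3 → ℝ) : ℝ :=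
  1 / (2 * m) * (w 1 ^ 2 + w 2 / w 0 ^ 2) - k / w 0

noncomputable def radialMomentumLsq (m M θ0 : ℝ) (y : PhaseSpace) : Fin 3 → ℝ :=
  ![y.1 0, y.2 0, Lsq m M θ0 y]

-- An identity of functions on all of phase space: at `r = 0` or `sin ϑ = 0` both sides divide by 0.
theorem Hsph_eq_comp (m k M θ0 : ℝ) :
    Hsph m k M θ0 = reducedHamiltonian m k ∘ radialMomentumLsq m M θ0 := by
  funext y
  simp only [Hsph, Lsq, reducedHamiltonian, radialMomentumLsq, Function.comp_apply,
    Matrix.cons_val]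
  ring

theorem differentiableAt_reducedHamiltonian (m k : ℝ) {w : Fin 3 → ℝ} (hw : w 0 ≠ 0) :
    DifferentiableAt ℝ (reducedHamiltonian m k) w := by
  unfold reducedHamiltonian
  fun_prop (disch := simp [hw])

theorem differentiableAt_radialMomentumLsq (m M θ0 : ℝ) {z : PhaseSpace}
    (hz : Real.sin (z.1 1) ≠ 0) : DifferentiableAt ℝ (radialMomentumLsq m M θ0) z :=
  .finCons (by fun_prop) <| .finCons (by fun_prop) <|
    .finCons (differentiableAt_Lsq m M θ0 hz) (differentiableAt_const _)

theorem canBracket_radialMomentumLsq_Lsq (m M θ0 : ℝ) (z : PhaseSpace) :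
    (fun i => canBracket (fun y => radialMomentumLsq m M θ0 y i) (Lsq m M θ0) z) = 0 := by
  funext i
  fin_cases i
  · simp [radialMomentumLsq, canBracket_fst_apply_left, pdP_Lsq_zero]
  · simp [radialMomentumLsq, canBracket_snd_apply_left, pdQ_Lsq_zero]
  · simp [radialMomentumLsq, canBracket_self]

theorem stmt11_general (m k M θ0 : ℝ) :
    ∀ z : PhaseSpace, 0 < z.1 0 → Real.sin (z.1 1) ≠ 0 →
      0 < 1 + (θ0 / m) * Real.sin (2 * z.1 2) →
      canBracket (Hsph m k M θ0) (Lsq m M θ0) z = 0 := by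
  intro z hr hs _
  have hΦ : DifferentiableAt ℝ (reducedHamiltonian m k) (radialMomentumLsq m M θ0 z) :=
    differentiableAt_reducedHamiltonian m k hr.ne'
  rw [Hsph_eq_comp, canBracket_comp hΦ (differentiableAt_radialMomentumLsq m M θ0 hs),
    canBracket_radialMomentumLsq_Lsq, map_zero]

/-- `L̃²` is an integral of motion for the spherical-polar Kepler Hamiltonian:
`{H', L̃²} = 0` on the open set `r > 0`, `sin ϑ ≠ 0`, `1 + (θ̇₀/m) sin 2φ > 0`. -/
theorem stmt11 (m k M θ0 : ℝ) (hm : 0 < m) :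
    ∀ z : PhaseSpace, 0 < z.1 0 → Real.sin (z.1 1) ≠ 0 →
      0 < 1 + (θ0 / m) * Real.sin (2 * z.1 2) →
      canBracket (Hsph m k M θ0) (Lsq m M θ0) z = 0 :=
  stmt11_general m k M θ0
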